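/- Define the multiplicative arithmetic function $\psi(q) = \sum_{\mathbf{a}, \mathbf{b} \bmod q,\ \gcd(q, \mathbf{a}) = 1} c_q(F(\mathbf{a};\mathbf{b}))$ where $F(\mathbf{a};\mathbf{b}) = \sum_{i=1}^4 a_i b_i^2$ and $c_q$ is the Ramanujan sum, with $\mathbf{a}, \mathbf{b}$ ranging over $(\mathbb{Z}/q\mathbb{Z})^4$. Then for every prime $p$ and $f \geq 1$: $\psi(p^f) = \phi(p^f)\, p^{6f}(1 - p^{-4})$ if $f$ is even, and $\psi(p^f) = 0$ if $f$ is odd. -/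

import Mathlib

open Finset

/-- `e_q(t) = exp(2πit/q)`. -/
noncomputable def eq' (q : ℕ) (t : ℤ) : ℂ :=
  Complex.exp (2 * Real.pi * Complex.I * (t : ℂ) / (q : ℂ))

lemma eq'_add (q : ℕ) (s t : ℤ) : eq' q (s + t) = eq' q s * eq' q t := by
  rw [eq', eq', eq', ← Complex.exp_add]
  congr 1
  push_cast
  ring

lemma eq'_zero (q : ℕ) : eq' q 0 = 1 := by simp [eq']

lemma eq'_natmul (q : ℕ) (x : ℕ) (m : ℤ) : eq' q ((x : ℤ) * m) = eq' q m ^ x := by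
  induction x with
  | zero => simp [eq'_zero]
  | succ n ih =>
      have : ((n + 1 : ℕ) : ℤ) * m = (n : ℤ) * m + m := by push_cast; ring
      rw [this, eq'_add, ih, pow_succ]

lemma eq'_sum {ι : Type*} (q : ℕ) (s : Finset ι) (g : ι → ℤ) :
    eq' q (∑ i ∈ s, g i) = ∏ i ∈ s, eq' q (g i) := by
  induction s using Finset.cons_induction with
  | empty => simp [eq'_zero]
  | cons a s ha ih => rw [Finset.sum_cons, eq'_add, Finset.prod_cons, ih]

lemma eq'_eq_one (q : ℕ) (hq : q ≠ 0) {m : ℤ} (h : (q : ℤ) ∣ m) : eq' q m = 1 := by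
  obtain ⟨t, rfl⟩ := h
  rw [eq']
  have hq' : (q : ℂ) ≠ 0 := Nat.cast_ne_zero.2 hq
  have : 2 * (Real.pi : ℂ) * Complex.I * (((q : ℤ) * t : ℤ) : ℂ) / (q : ℂ)
      = (t : ℂ) * (2 * Real.pi * Complex.I) := by
    push_cast
    field_simp
  rw [this, Complex.exp_int_mul_two_pi_mul_I]

lemma eq'_ne_one (q : ℕ) (hq : q ≠ 0) {m : ℤ} (h : ¬ (q : ℤ) ∣ m) : eq' q m ≠ 1 := by
  intro hone
  rw [eq', Complex.exp_eq_one_iff] at hone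
  obtain ⟨n, hn⟩ := hone
  apply h
  refine ⟨n, ?_⟩
  have hq' : (q : ℂ) ≠ 0 := Nat.cast_ne_zero.2 hq
  have h2 : (2 * (Real.pi:ℂ) * Complex.I) ≠ 0 := by
    simp [Real.pi_ne_zero, Complex.I_ne_zero, Complex.ofReal_ne_zero]
  have : (m : ℂ) = (n : ℂ) * q := by
    field_simp at hn
    have := hn
    -- hn : 2 * π * I * m = n * (2 * π * I) * q
    have h3 : (2 * (Real.pi:ℂ) * Complex.I) * (m : ℂ) = (2 * (Real.pi:ℂ) * Complex.I) * ((n : ℂ) * q) := by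
      rw [hn]; ring
    exact mul_left_cancel₀ h2 h3
  have h4 : (m : ℂ) = (((q : ℤ) * n : ℤ) : ℂ) := by rw [this]; push_cast; ring
  exact_mod_cast h4

lemma sum_eq' (q : ℕ) (hq : q ≠ 0) (m : ℤ) :
    ∑ x ∈ range q, eq' q ((x : ℤ) * m) = if (q : ℤ) ∣ m then (q : ℂ) else 0 := by
  by_cases h : (q : ℤ) ∣ m
  · rw [if_pos h]
    have : ∀ x ∈ range q, eq' q ((x : ℤ) * m) = 1 := fun x _ =>
      eq'_eq_one q hq (Dvd.dvd.mul_left h _)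
    rw [Finset.sum_congr rfl this, Finset.sum_const, card_range, nsmul_eq_mul, mul_one]
  · rw [if_neg h]
    have hz : eq' q m ≠ 1 := eq'_ne_one q hq h
    calc ∑ x ∈ range q, eq' q ((x : ℤ) * m) = ∑ x ∈ range q, (eq' q m) ^ x := by
          exact Finset.sum_congr rfl fun x _ => eq'_natmul q x m
      _ = ((eq' q m) ^ q - 1) / (eq' q m - 1) := geom_sum_eq hz q
      _ = 0 := by
          rw [← eq'_natmul, eq'_eq_one q hq ⟨m, by ring⟩]
          simp

lemma eq'_mul_left (d k : ℕ) (hd : d ≠ 0) (t : ℤ) : eq' (d * k) ((d : ℤ) * t) = eq' k t := by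
  rw [eq', eq']
  congr 1
  have hd' : (d : ℂ) ≠ 0 := Nat.cast_ne_zero.2 hd
  push_cast
  rw [show 2 * (Real.pi:ℂ) * Complex.I * ((d:ℂ) * t) = (d:ℂ) * (2 * Real.pi * Complex.I * t) by ring,
    mul_div_mul_left _ _ hd']

lemma filter_dvd_range (d k : ℕ) (hd : d ≠ 0) :
    (range (d * k)).filter (fun x => d ∣ x) = (range k).image (fun y => d * y) := by
  ext x
  simp only [mem_filter, mem_range, mem_image]
  constructor
  · rintro ⟨hx, y, rfl⟩
    exact ⟨y, by exact lt_of_mul_lt_mul_left hx (Nat.zero_le d), rfl⟩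
  · rintro ⟨y, hy, rfl⟩
    exact ⟨(Nat.mul_lt_mul_left (Nat.pos_of_ne_zero hd)).2 hy, ⟨y, rfl⟩⟩

lemma card_filter_dvd (d k : ℕ) (hd : d ≠ 0) :
    ((range (d * k)).filter (fun x => d ∣ x)).card = k := by
  rw [filter_dvd_range d k hd, Finset.card_image_of_injective _ (mul_right_injective₀ hd),
    card_range]

lemma sum_eq'_div (d k : ℕ) (hd : d ≠ 0) (hk : k ≠ 0) (m : ℤ) :
    ∑ x ∈ (range (d * k)).filter (fun x => d ∣ x), eq' (d * k) ((x : ℤ) * m)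
      = if (k : ℤ) ∣ m then (k : ℂ) else 0 := by
  rw [filter_dvd_range d k hd, Finset.sum_image (fun a _ b _ h => mul_right_injective₀ hd h)]
  have : ∀ y ∈ range k, eq' (d * k) (((d * y : ℕ) : ℤ) * m) = eq' k ((y : ℤ) * m) := by
    intro y _
    rw [show ((d * y : ℕ) : ℤ) * m = (d : ℤ) * ((y:ℤ) * m) by push_cast; ring]
    exact eq'_mul_left d k hd _
  rw [Finset.sum_congr rfl this, sum_eq' k hk m]

lemma pow_dvd_sq {p : ℕ} (hp : p.Prime) (e b : ℕ) : p ^ e ∣ b ^ 2 ↔ p ^ ((e + 1) / 2) ∣ b := by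
  rcases eq_or_ne b 0 with rfl | hb
  · simp
  · rw [Nat.Prime.pow_dvd_iff_le_factorization hp (pow_ne_zero 2 hb),
      Nat.Prime.pow_dvd_iff_le_factorization hp hb, Nat.factorization_pow]
    simp only [Finsupp.smul_apply, smul_eq_mul]
    omega

/-- The Ramanujan sum `c_q(N) = ∑*_{a mod q} e_q(aN)`. -/
noncomputable def ramanujanC (q : ℕ) (N : ℤ) : ℂ :=
  ∑ a ∈ (Finset.range q).filter (fun a => Nat.gcd a q = 1), eq' q ((a : ℤ) * N)

lemma card_sq_filter {p : ℕ} (hp : p.Prime) (f e : ℕ) (he : e ≤ f) :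
    ((range (p ^ f)).filter (fun b : ℕ => ((p ^ e : ℕ) : ℤ) ∣ (b : ℤ) ^ 2)).card
      = p ^ (f - (e + 1) / 2) := by
  have h1 : ∀ b : ℕ, (((p ^ e : ℕ) : ℤ) ∣ (b : ℤ) ^ 2) ↔ p ^ ((e + 1) / 2) ∣ b := by
    intro b
    rw [show ((b : ℤ))^2 = ((b ^ 2 : ℕ) : ℤ) by push_cast; ring, Int.natCast_dvd_natCast]
    exact pow_dvd_sq hp e b
  rw [Finset.filter_congr (fun b _ => by rw [h1 b])]
  have h2 : p ^ f = p ^ ((e + 1) / 2) * p ^ (f - (e + 1) / 2) := by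
    rw [← pow_add]
    congr 1
    omega
  rw [h2, card_filter_dvd _ _ (pow_ne_zero _ hp.pos.ne')]

lemma prod_ite_forall {P : Fin 4 → Prop} [DecidablePred P] (g : Fin 4 → ℂ) :
    (if ∀ i, P i then ∏ i, g i else 0) = ∏ i, if P i then g i else 0 := by
  by_cases h : ∀ i, P i
  · rw [if_pos h]
    exact Finset.prod_congr rfl fun i _ => (if_pos (h i)).symm
  · rw [if_neg h]
    push_neg at h
    obtain ⟨i, hi⟩ := h
    exact (Finset.prod_eq_zero (mem_univ i) (by simp [hi])).symm

lemma key {p : ℕ} (hp : p.Prime) {f : ℕ} (d k : ℕ) (hdk : d * k = p ^ f) (hd : d ≠ 0)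
    (hk : k ≠ 0) :
    (∑ a ∈ Fintype.piFinset (fun _ : Fin 4 => Finset.range (p ^ f)),
      ∑ b ∈ Fintype.piFinset (fun _ : Fin 4 => Finset.range (p ^ f)),
        if ∀ i, d ∣ a i then ramanujanC (p ^ f) (∑ i, (a i : ℤ) * (b i : ℤ) ^ 2) else 0)
    = (Nat.totient (p ^ f) : ℂ) *
        ((k : ℂ) * (((range (p ^ f)).filter (fun b : ℕ => (k : ℤ) ∣ (b : ℤ) ^ 2)).card : ℂ)) ^ 4 := by
  set q := p ^ f with hq
  have hq0 : q ≠ 0 := pow_ne_zero _ hp.pos.ne'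
  -- push the ite inside the c-sum and swap sums
  have step1 : ∀ (a b : Fin 4 → ℕ),
      (if ∀ i, d ∣ a i then ramanujanC q (∑ i, (a i : ℤ) * (b i : ℤ) ^ 2) else 0)
      = ∑ c ∈ (range q).filter (fun c => Nat.gcd c q = 1),
          if ∀ i, d ∣ a i then eq' q ((c : ℤ) * ∑ i, (a i : ℤ) * (b i : ℤ) ^ 2) else 0 := by
    intro a b
    by_cases h : ∀ i, d ∣ a i
    · simp only [if_pos h, ramanujanC]
    · simp [if_neg h]
  calc (∑ a ∈ Fintype.piFinset (fun _ : Fin 4 => Finset.range q),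
      ∑ b ∈ Fintype.piFinset (fun _ : Fin 4 => Finset.range q),
        if ∀ i, d ∣ a i then ramanujanC q (∑ i, (a i : ℤ) * (b i : ℤ) ^ 2) else 0)
      = ∑ c ∈ (range q).filter (fun c => Nat.gcd c q = 1),
          ∑ b ∈ Fintype.piFinset (fun _ : Fin 4 => Finset.range q),
            ∑ a ∈ Fintype.piFinset (fun _ : Fin 4 => Finset.range q),
              if ∀ i, d ∣ a i then eq' q ((c : ℤ) * ∑ i, (a i : ℤ) * (b i : ℤ) ^ 2) else 0 := by
        simp only [step1]
        exact (Finset.sum_congr rfl fun a _ => Finset.sum_comm).trans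
          (Finset.sum_comm.trans (Finset.sum_congr rfl fun c _ => Finset.sum_comm))
    _ = ∑ c ∈ (range q).filter (fun c => Nat.gcd c q = 1),
          ((k : ℂ) * (((range q).filter (fun b : ℕ => (k : ℤ) ∣ (b : ℤ) ^ 2)).card : ℂ)) ^ 4 := by
        apply Finset.sum_congr rfl
        intro c hc
        simp only [mem_filter] at hc
        have hkc : IsCoprime (k : ℤ) (c : ℤ) := by
          rw [Nat.isCoprime_iff_coprime]
          exact Nat.Coprime.coprime_dvd_left ⟨d, (mul_comm d k) ▸ hdk.symm⟩
            (Nat.coprime_comm.1 hc.2)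
        have hfac : ∀ m : ℤ, ((k : ℤ) ∣ (c : ℤ) * m) ↔ ((k : ℤ) ∣ m) := fun m =>
          ⟨fun h => hkc.dvd_of_dvd_mul_left h, fun h => h.mul_left _⟩
        have inner_a : ∀ b : Fin 4 → ℕ,
            (∑ a ∈ Fintype.piFinset (fun _ : Fin 4 => Finset.range q),
              if ∀ i, d ∣ a i then eq' q ((c : ℤ) * ∑ i, (a i : ℤ) * (b i : ℤ) ^ 2) else 0)
            = ∏ i : Fin 4, (if (k : ℤ) ∣ (b i : ℤ) ^ 2 then (k : ℂ) else 0) := by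
          intro b
          have e1 : ∀ a : Fin 4 → ℕ,
              (if ∀ i, d ∣ a i then eq' q ((c : ℤ) * ∑ i, (a i : ℤ) * (b i : ℤ) ^ 2) else 0)
              = ∏ i, (if d ∣ a i then eq' q ((a i : ℤ) * ((c : ℤ) * (b i : ℤ) ^ 2)) else 0) := by
            intro a
            rw [show (c : ℤ) * ∑ i, (a i : ℤ) * (b i : ℤ) ^ 2
                = ∑ i, (a i : ℤ) * ((c : ℤ) * (b i : ℤ) ^ 2) by
              rw [Finset.mul_sum]; exact Finset.sum_congr rfl fun i _ => by ring,
              eq'_sum]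
            exact prod_ite_forall _
          rw [Finset.sum_congr rfl (fun a _ => e1 a),
            ← Finset.prod_univ_sum (fun _ : Fin 4 => range q)
              (fun i x => if d ∣ x then eq' q ((x : ℤ) * ((c : ℤ) * (b i : ℤ) ^ 2)) else 0)]
          apply Finset.prod_congr rfl
          intro i _
          rw [← Finset.sum_filter, ← hdk,
            sum_eq'_div d k hd hk ((c : ℤ) * (b i : ℤ) ^ 2)]
          rw [if_congr (hfac _) rfl rfl]
        rw [Finset.sum_congr rfl (fun b _ => inner_a b),
          ← Finset.prod_univ_sum (fun _ : Fin 4 => range q)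
            (fun _ x => if (k : ℤ) ∣ (x : ℤ) ^ 2 then (k : ℂ) else 0),
          Finset.prod_const, card_univ, Fintype.card_fin]
        have : (∑ x ∈ range q, if (k : ℤ) ∣ (x : ℤ) ^ 2 then (k : ℂ) else 0)
            = (((range q).filter (fun b : ℕ => (k : ℤ) ∣ (b : ℤ) ^ 2)).card : ℂ) * k := by
          rw [← Finset.sum_filter, Finset.sum_const, nsmul_eq_mul]
        rw [this, mul_comm]
    _ = (Nat.totient q : ℂ) *
        ((k : ℂ) * (((range q).filter (fun b : ℕ => (k : ℤ) ∣ (b : ℤ) ^ 2)).card : ℂ)) ^ 4 := by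
        rw [Finset.sum_const, nsmul_eq_mul]
        congr 2
        rw [Nat.totient_eq_card_coprime]
        exact congrArg Finset.card
          (Finset.filter_congr (fun x _ => by
            simp [Nat.Coprime, Nat.gcd_comm])) |>.symm

/-- `ψ(q) = ∑_{a, b mod q, gcd(q, a) = 1} c_q(F(a; b))` with `F(a; b) = ∑ a i * b i ^ 2`. -/
noncomputable def psi (q : ℕ) : ℂ :=
  ∑ a ∈ Fintype.piFinset (fun _ : Fin 4 => Finset.range q),
    ∑ b ∈ Fintype.piFinset (fun _ : Fin 4 => Finset.range q),
      if Nat.gcd q (Finset.univ.gcd fun i => a i) = 1 then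
        ramanujanC q (∑ i, (a i : ℤ) * (b i : ℤ) ^ 2)
      else 0

theorem stmt_8 (p : ℕ) (hp : p.Prime) (f : ℕ) (hf : 1 ≤ f) :
    psi (p ^ f) =
      if Even f then (Nat.totient (p ^ f) : ℂ) * (p : ℂ) ^ (6 * f) * (1 - (p : ℂ) ^ (-4 : ℤ))
      else 0 := by
  have hp0 : p ≠ 0 := hp.pos.ne'
  have hA := key hp (f := f) 1 (p ^ f) (one_mul _) one_ne_zero (pow_ne_zero _ hp0)
  have hB := key hp (f := f) p (p ^ (f - 1))
    (by rw [mul_comm, ← pow_succ, Nat.sub_add_cancel hf]) hp0 (pow_ne_zero _ hp0)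
  have hcond : ∀ a : Fin 4 → ℕ,
      (Nat.gcd (p ^ f) (Finset.univ.gcd fun i => a i) = 1) ↔ ¬ ∀ i, p ∣ a i := by
    intro a
    rw [show (Nat.gcd (p ^ f) (Finset.univ.gcd fun i => a i) = 1)
        = Nat.Coprime (p ^ f) (Finset.univ.gcd fun i => a i) from rfl,
      Nat.coprime_pow_left_iff (by omega), Nat.Prime.coprime_iff_not_dvd hp,
      Finset.dvd_gcd_iff]
    simp
  have hsplit : ∀ (a : Fin 4 → ℕ) (X : ℂ),
      (if Nat.gcd (p ^ f) (Finset.univ.gcd fun i => a i) = 1 then X else 0)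
      = (if ∀ i, (1 : ℕ) ∣ a i then X else 0) - (if ∀ i, p ∣ a i then X else 0) := by
    intro a X
    by_cases h : ∀ i, p ∣ a i
    · rw [if_pos h, if_pos (fun i => one_dvd _),
        if_neg (by rw [hcond a]; exact not_not_intro h)]
      ring
    · rw [if_pos ((hcond a).2 h), if_pos (fun i => one_dvd _), if_neg h, sub_zero]
  rw [psi]
  rw [Finset.sum_congr rfl (fun a _ => Finset.sum_congr rfl (fun b _ =>
    hsplit a (ramanujanC (p ^ f) (∑ i, (a i : ℤ) * (b i : ℤ) ^ 2))))]
  simp only [Finset.sum_sub_distrib]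
  rw [hA, hB, card_sq_filter hp f f le_rfl, card_sq_filter hp f (f - 1) (by omega)]
  have hpc : (p : ℂ) ≠ 0 := Nat.cast_ne_zero.2 hp0
  push_cast
  rw [← pow_add, ← pow_mul, ← pow_add, ← pow_mul]
  by_cases hev : Even f
  · rw [if_pos hev]
    obtain ⟨g, hg⟩ := hev
    have h2 : f % 2 = 0 := by omega
    have e1 : (f + (f - (f + 1) / 2)) * 4 = 6 * f := by omega
    have e2 : (f - 1 + (f - (f - 1 + 1) / 2)) * 4 = 6 * f - 4 := by omega
    rw [e1, e2, mul_sub, mul_one]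
    congr 1
    have hp4 : (p : ℂ) ^ (6 * f) = (p : ℂ) ^ (6 * f - 4) * (p : ℂ) ^ 4 := by
      rw [← pow_add]; congr 1; omega
    have hz : (p : ℂ) ^ (-4 : ℤ) = ((p : ℂ) ^ 4)⁻¹ := by
      rw [show (-4 : ℤ) = -(4 : ℕ) by norm_num, zpow_neg, zpow_natCast]
    rw [hz, hp4, mul_assoc, mul_assoc, mul_inv_cancel₀ (pow_ne_zero 4 hpc), mul_one]
  · rw [if_neg hev]
    have h2 : f % 2 = 1 := by
      rcases Nat.even_or_odd f with h | h
      · exact absurd h hev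
      · exact Nat.odd_iff.1 h
    have e3 : (f + (f - (f + 1) / 2)) * 4 = (f - 1 + (f - (f - 1 + 1) / 2)) * 4 := by omega
    rw [e3, sub_self]
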